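/- Let A and B be nonempty compact convex subsets of ℝⁿ. Then the (n+1)-dimensional Lebesgue measure of conv((A×{1}) ∪ (B×{0})) ⊆ ℝⁿ⁺¹ equals ∫₀¹ volₙ(r·A + (1−r)·B) dr, where volₙ denotes n-dimensional Lebesgue measure. -/

import Mathlib

/-!
Slicing at height `r`, the Cayley sum `conv((A × {1}) ∪ (B × {0}))` of convex sets has fibre
`r • A + (1 - r) • B` for `r ∈ [0, 1]` and is empty elsewhere, so its volume is the integral of
the fibre volumes by Fubini–Tonelli. Compactness makes everything finite, which lets the
`ℝ≥0∞`-valued identity pass to real parts.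
-/

open Set Pointwise MeasureTheory

section CayleySum

variable {E : Type*} [AddCommGroup E] [Module ℝ E]

def cayleySum (A B : Set E) : Set (E × ℝ) :=
  {p | p.2 ∈ Icc (0 : ℝ) 1 ∧ p.1 ∈ p.2 • A + (1 - p.2) • B}

theorem convexHull_union_prod_singleton_eq_cayleySum {A B : Set E}
    (hAne : A.Nonempty) (hBne : B.Nonempty) (hAv : Convex ℝ A) (hBv : Convex ℝ B) :
    convexHull ℝ ((A ×ˢ ({1} : Set ℝ)) ∪ (B ×ˢ ({0} : Set ℝ))) = cayleySum A B := by
  rw [(hAv.prod (convex_singleton 1)).convexHull_union (hBv.prod (convex_singleton 0))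
    (hAne.prod (singleton_nonempty _)) (hBne.prod (singleton_nonempty _))]
  ext ⟨x, r⟩
  simp only [mem_convexJoin, cayleySum, mem_ofPred_eq]
  constructor
  · rintro ⟨⟨a, _⟩, ⟨ha, rfl⟩, ⟨b, _⟩, ⟨hb, rfl⟩, θ, η, hθ, hη, hsum, heq⟩
    obtain ⟨hx, hr⟩ := Prod.ext_iff.mp heq
    obtain rfl : η = 1 - θ := by linarith
    obtain rfl : θ = r := by simpa using hr
    exact ⟨⟨hθ, by linarith⟩, θ • a, smul_mem_smul_set ha, (1 - θ) • b, smul_mem_smul_set hb, hx⟩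
  · rintro ⟨⟨hr0, hr1⟩, _, ⟨a, ha, rfl⟩, _, ⟨b, hb, rfl⟩, hx⟩
    refine ⟨(a, 1), ⟨ha, rfl⟩, (b, 0), ⟨hb, rfl⟩, r, 1 - r, hr0, by linarith, by ring, ?_⟩
    ext <;> simp [hx]

theorem cayleySum_eq_image (A B : Set E) :
    cayleySum A B = (fun q : (E × E) × ℝ => (q.2 • q.1.1 + (1 - q.2) • q.1.2, q.2)) ''
      ((A ×ˢ B) ×ˢ Icc 0 1) := by
  ext ⟨x, r⟩
  constructor
  · rintro ⟨hr, _, ⟨a, ha, rfl⟩, _, ⟨b, hb, rfl⟩, hx⟩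
    exact ⟨((a, b), r), ⟨⟨ha, hb⟩, hr⟩, by simp [hx]⟩
  · rintro ⟨⟨⟨a, b⟩, s⟩, ⟨⟨ha, hb⟩, hs⟩, heq⟩
    obtain ⟨hx, rfl⟩ := Prod.ext_iff.mp heq
    exact ⟨hs, s • a, smul_mem_smul_set ha, (1 - s) • b, smul_mem_smul_set hb, hx⟩

theorem isCompact_cayleySum [TopologicalSpace E] [IsTopologicalAddGroup E] [ContinuousSMul ℝ E]
    {A B : Set E} (hA : IsCompact A) (hB : IsCompact B) : IsCompact (cayleySum A B) := by
  rw [cayleySum_eq_image]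
  exact ((hA.prod hB).prod isCompact_Icc).image (by fun_prop)

theorem preimage_prodMk_cayleySum_of_mem (A B : Set E) {r : ℝ} (hr : r ∈ Icc (0 : ℝ) 1) :
    (fun x => (x, r)) ⁻¹' cayleySum A B = r • A + (1 - r) • B := by
  ext x
  simp [cayleySum, hr.1, hr.2]

theorem preimage_prodMk_cayleySum_of_notMem (A B : Set E) {r : ℝ} (hr : r ∉ Icc (0 : ℝ) 1) :
    (fun x => (x, r)) ⁻¹' cayleySum A B = ∅ := by
  ext x
  simp only [cayleySum, mem_preimage, mem_ofPred_eq, mem_empty_iff_false, iff_false]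
  exact fun h => hr h.1

variable [MeasurableSpace E] (μ : Measure E) [SFinite μ] {A B : Set E}

theorem prod_volume_cayleySum (hS : MeasurableSet (cayleySum A B)) :
    μ.prod volume (cayleySum A B) = ∫⁻ r in Icc (0 : ℝ) 1, μ (r • A + (1 - r) • B) := by
  rw [Measure.prod_apply_symm hS, ← lintegral_indicator measurableSet_Icc]
  congr 1 with r
  by_cases hr : r ∈ Icc (0 : ℝ) 1
  · rw [preimage_prodMk_cayleySum_of_mem A B hr, indicator_of_mem hr]
  · rw [preimage_prodMk_cayleySum_of_notMem A B hr, indicator_of_notMem hr, measure_empty]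

theorem aemeasurable_measure_cayleySum_fiber (hS : MeasurableSet (cayleySum A B)) :
    AEMeasurable (fun r => μ (r • A + (1 - r) • B)) (volume.restrict (Icc (0 : ℝ) 1)) := by
  refine (measurable_measure_prodMk_right (μ := μ) hS).aemeasurable.congr ?_
  filter_upwards [ae_restrict_mem measurableSet_Icc] with r hr
  rw [preimage_prodMk_cayleySum_of_mem A B hr]

end CayleySum

theorem cayley_sum_volume (n : ℕ) (A B : Set (Fin n → ℝ))
    (hAne : A.Nonempty) (hBne : B.Nonempty)
    (hAc : IsCompact A) (hBc : IsCompact B)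
    (hAv : Convex ℝ A) (hBv : Convex ℝ B) :
    (volume (convexHull ℝ
        ((A ×ˢ ({1} : Set ℝ)) ∪ (B ×ˢ ({0} : Set ℝ))))).toReal =
      ∫ r in (0 : ℝ)..1, (volume (r • A + (1 - r) • B)).toReal := by
  have hS := isCompact_cayleySum hAc hBc
  have hvol : volume (cayleySum A B) = ∫⁻ r in Icc (0 : ℝ) 1, volume (r • A + (1 - r) • B) := by
    rw [Measure.volume_eq_prod, prod_volume_cayleySum _ hS.measurableSet]
  have hmeas := aemeasurable_measure_cayleySum_fiber volume hS.measurableSet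
  have hfin : ∀ᵐ r ∂volume.restrict (Icc (0 : ℝ) 1), volume (r • A + (1 - r) • B) < ⊤ :=
    ae_lt_top' hmeas (hvol ▸ hS.measure_lt_top.ne)
  rw [convexHull_union_prod_singleton_eq_cayleySum hAne hBne hAv hBv, hvol,
    intervalIntegral.integral_of_le zero_le_one, ← integral_Icc_eq_integral_Ioc,
    integral_toReal hmeas hfin]
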